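/- Let ρ be a positive definite operator and V a nonzero operator on a finite-dimensional complex Hilbert space such that tr(ρ^{1/2}V*ρ^{1/2}V) > 0 and tr(ρ^{1/2}V*ρ^{1/2}V)² = tr(ρV*V)·tr(ρVV*), and let γ⁻, γ⁺ > 0 satisfy γ⁻·tr(ρV*V) = γ⁺·tr(ρVV*). Then (γ⁺)^{1/2} ρ^{1/2} V = (γ⁻)^{1/2} V ρ^{1/2}. -/

import Mathlib

/-!
Write `S = ρ^{1/2}`, `x = S V` and `y = V S`. In the Hilbert–Schmidt inner product,
`tr(S V* S V) = ⟪x, y⟫`, `tr(ρ V V*) = ‖x‖²` and `tr(ρ V* V) = ‖y‖²`. A complex number with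
positive real part whose square is `(‖x‖ ‖y‖)²` equals `‖x‖ ‖y‖`, so `x` and `y` realise equality
in the Cauchy–Schwarz inequality and `‖y‖ x = ‖x‖ y`. The rate condition reads
`γ⁻ ‖y‖² = γ⁺ ‖x‖²`, i.e. `√γ⁻ ‖y‖ = √γ⁺ ‖x‖`, and dividing by `‖x‖ ≠ 0` gives the claim.
-/

open Matrix ComplexOrder

/-- The positive semidefinite square root of a positive semidefinite matrix, as defined in
Mathlib of December 2024 (`Matrix.PosSemidef.sqrt`, since removed from Mathlib). -/
noncomputable def Matrix.PosSemidef.sqrt {n 𝕜 : Type*} [Fintype n] [DecidableEq n] [RCLike 𝕜]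
    {A : Matrix n n 𝕜} (hA : A.PosSemidef) : Matrix n n 𝕜 :=
  (hA.1.eigenvectorUnitary : Matrix n n 𝕜) * diagonal ((↑) ∘ (fun x => Real.sqrt x) ∘ hA.1.eigenvalues) *
    (star hA.1.eigenvectorUnitary : Matrix n n 𝕜)

namespace Matrix.PosSemidef
variable {n 𝕜 : Type*} [Fintype n] [DecidableEq n] [RCLike 𝕜] {A : Matrix n n 𝕜}

theorem sqrt_eq_cfc (hA : A.PosSemidef) : hA.sqrt = cfc Real.sqrt A := by
  rw [hA.1.cfc_eq, IsHermitian.cfc, Unitary.conjStarAlgAut_apply]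
  rfl

theorem conjTranspose_sqrt (hA : A.PosSemidef) : hA.sqrtᴴ = hA.sqrt := by
  rw [sqrt_eq_cfc]
  exact (cfc_predicate Real.sqrt A).star_eq

open scoped MatrixOrder in
theorem sqrt_mul_self (hA : A.PosSemidef) : hA.sqrt * hA.sqrt = A := by
  conv_rhs => rw [← cfc_id' ℝ A]
  rw [sqrt_eq_cfc, ← cfc_mul ..]
  exact cfc_congr fun x hx ↦ Real.mul_self_sqrt (spectrum_nonneg_of_nonneg hA.nonneg hx)

end Matrix.PosSemidef

theorem RCLike.eq_ofReal_of_sq_eq_sq {𝕜 : Type*} [RCLike 𝕜] {z : 𝕜} {r : ℝ} (hr : 0 ≤ r)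
    (hz : 0 < RCLike.re z) (h : z ^ 2 = (r : 𝕜) ^ 2) : z = r := by
  refine (sq_eq_sq_iff_eq_or_eq_neg.1 h).resolve_right fun hneg ↦ ?_
  rw [hneg, map_neg, RCLike.ofReal_re] at hz
  linarith

section InnerProductSpace
variable {𝕜 E : Type*} [RCLike 𝕜] [NormedAddCommGroup E] [InnerProductSpace 𝕜 E]
open RCLike

theorem inner_eq_norm_mul_norm_of_inner_sq_eq {x y : E} (hpos : 0 < re (inner 𝕜 x y))
    (heq : inner 𝕜 x y ^ 2 = inner 𝕜 x x * inner 𝕜 y y) :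
    inner 𝕜 x y = (‖x‖ : 𝕜) * ‖y‖ := by
  rw [← ofReal_mul]
  refine eq_ofReal_of_sq_eq_sq (by positivity) hpos ?_
  rw [heq, inner_self_eq_norm_sq_to_K, inner_self_eq_norm_sq_to_K]
  push_cast
  ring

theorem sqrt_smul_eq_sqrt_smul_of_inner_sq_eq {x y : E} {γm γp : ℝ}
    (hpos : 0 < re (inner 𝕜 x y)) (heq : inner 𝕜 x y ^ 2 = inner 𝕜 x x * inner 𝕜 y y)
    (hγ : (γm : 𝕜) * inner 𝕜 y y = γp * inner 𝕜 x x) :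
    (√γp : 𝕜) • x = (√γm : 𝕜) • y := by
  have hx : x ≠ 0 := by rintro rfl; simp at hpos
  have hxy : (‖y‖ : 𝕜) • x = (‖x‖ : 𝕜) • y :=
    inner_eq_norm_mul_iff.1 (inner_eq_norm_mul_norm_of_inner_sq_eq hpos heq)
  have hnorm : √γm * ‖y‖ = √γp * ‖x‖ := by
    rw [inner_self_eq_norm_sq_to_K, inner_self_eq_norm_sq_to_K] at hγ
    have : γm * ‖y‖ ^ 2 = γp * ‖x‖ ^ 2 := by exact_mod_cast hγ
    rw [← Real.sqrt_sq (norm_nonneg y), ← Real.sqrt_sq (norm_nonneg x), ← Real.sqrt_mul',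
      ← Real.sqrt_mul', this] <;> positivity
  refine smul_right_injective E ((ofReal_ne_zero (K := 𝕜)).2 (norm_ne_zero_iff.2 hx)) ?_
  calc (‖x‖ : 𝕜) • (√γp : 𝕜) • x = ((√γm * ‖y‖ : ℝ) : 𝕜) • x := by
        rw [smul_smul, hnorm]; push_cast; ring_nf
    _ = (‖x‖ : 𝕜) • (√γm : 𝕜) • y := by
        rw [ofReal_mul, mul_smul, hxy, smul_comm]

end InnerProductSpace

namespace Matrix
variable {n 𝕜 : Type*} [Fintype n] [DecidableEq n] [RCLike 𝕜]

theorem sqrt_smul_eq_sqrt_smul_of_trace_sq_eq {X Y : Matrix n n 𝕜} {γm γp : ℝ}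
    (hpos : 0 < RCLike.re (Xᴴ * Y).trace)
    (heq : (Xᴴ * Y).trace ^ 2 = (Xᴴ * X).trace * (Yᴴ * Y).trace)
    (hγ : (γm : 𝕜) * (Yᴴ * Y).trace = γp * (Xᴴ * X).trace) :
    (√γp : 𝕜) • X = (√γm : 𝕜) • Y := by
  let _ := toMatrixNormedAddCommGroup (1 : Matrix n n 𝕜) PosDef.one
  let _ := toMatrixInnerProductSpace (1 : Matrix n n 𝕜) PosDef.one.posSemidef
  have hinner (X Y : Matrix n n 𝕜) : inner 𝕜 X Y = (Xᴴ * Y).trace := by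
    change (Y * 1 * Xᴴ).trace = _
    rw [mul_one, trace_mul_comm]
  simp only [← hinner] at hpos heq hγ
  exact sqrt_smul_eq_sqrt_smul_of_inner_sq_eq hpos heq hγ

end Matrix

theorem sqrt_intertwining_of_schwarz_equality_general (d : ℕ) (ρ : Matrix (Fin d) (Fin d) ℂ)
    (hρ : ρ.PosDef) (V : Matrix (Fin d) (Fin d) ℂ)
    (hpos : 0 < ((hρ.posSemidef.sqrt * Vᴴ * hρ.posSemidef.sqrt * V).trace).re)
    (heq : ((hρ.posSemidef.sqrt * Vᴴ * hρ.posSemidef.sqrt * V).trace) ^ 2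
      = (ρ * Vᴴ * V).trace * (ρ * V * Vᴴ).trace)
    (γm γp : ℝ)
    (hγ : (γm : ℂ) * (ρ * Vᴴ * V).trace = (γp : ℂ) * (ρ * V * Vᴴ).trace) :
    (Real.sqrt γp : ℂ) • (hρ.posSemidef.sqrt * V)
      = (Real.sqrt γm : ℂ) • (V * hρ.posSemidef.sqrt) := by
  set S := hρ.posSemidef.sqrt
  have hS : Sᴴ = S := hρ.posSemidef.conjTranspose_sqrt
  have hSS : S * S = ρ := hρ.posSemidef.sqrt_mul_self
  have hcross : ((S * V)ᴴ * (V * S)).trace = (S * Vᴴ * S * V).trace := by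
    rw [conjTranspose_mul, hS, ← mul_assoc, trace_mul_comm]
    simp only [mul_assoc]
  have hleft : ((S * V)ᴴ * (S * V)).trace = (ρ * V * Vᴴ).trace := by
    rw [conjTranspose_mul, hS, ← hSS, mul_assoc, trace_mul_comm]
    simp only [mul_assoc]
  have hright : ((V * S)ᴴ * (V * S)).trace = (ρ * Vᴴ * V).trace := by
    rw [conjTranspose_mul, hS, ← hSS, ← mul_assoc, trace_mul_comm]
    simp only [mul_assoc]
  refine Matrix.sqrt_smul_eq_sqrt_smul_of_trace_sq_eq (X := S * V) (Y := V * S) ?_ ?_ ?_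
  · rwa [hcross]
  · rw [hcross, hleft, hright, heq, mul_comm]
  · rwa [hleft, hright]

/-- If ρ is positive definite, V ≠ 0, tr(ρ^{1/2}V*ρ^{1/2}V) is real and positive,
equality holds in the Schwarz inequality tr(ρ^{1/2}V*ρ^{1/2}V)² = tr(ρV*V)·tr(ρVV*), and
γ⁻, γ⁺ > 0 satisfy γ⁻·tr(ρV*V) = γ⁺·tr(ρVV*), then (γ⁺)^{1/2}ρ^{1/2}V = (γ⁻)^{1/2}Vρ^{1/2}. -/
theorem sqrt_intertwining_of_schwarz_equality (d : ℕ) (ρ : Matrix (Fin d) (Fin d) ℂ)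
    (hρ : ρ.PosDef) (V : Matrix (Fin d) (Fin d) ℂ) (hV : V ≠ 0)
    (hreal : ((hρ.posSemidef.sqrt * Vᴴ * hρ.posSemidef.sqrt * V).trace).im = 0)
    (hpos : 0 < ((hρ.posSemidef.sqrt * Vᴴ * hρ.posSemidef.sqrt * V).trace).re)
    (heq : ((hρ.posSemidef.sqrt * Vᴴ * hρ.posSemidef.sqrt * V).trace) ^ 2
      = (ρ * Vᴴ * V).trace * (ρ * V * Vᴴ).trace)
    (γm γp : ℝ) (hγm : 0 < γm) (hγp : 0 < γp)
    (hγ : (γm : ℂ) * (ρ * Vᴴ * V).trace = (γp : ℂ) * (ρ * V * Vᴴ).trace) :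
    (Real.sqrt γp : ℂ) • (hρ.posSemidef.sqrt * V)
      = (Real.sqrt γm : ℂ) • (V * hρ.posSemidef.sqrt) :=
  sqrt_intertwining_of_schwarz_equality_general d ρ hρ V hpos heq γm γp hγ
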